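/- arXiv:2207.12507 — 2 statements merged into one kernel-verified Lean document; each statement's English description precedes it below -/
import Mathlib

section
/- Let G be a bipartite-like flow network with source s, job vertices J, machine-node vertices M, and sink t, where edge s→j has capacity p(j), edge j→i (for i in a set D(j) ⊆ M) has capacity x(i), and edge i→t has capacity g·x(i), with p(j), x(i) nonnegative reals and g a positive real. Then the maximum s-t flow equals ∑_j p(j) if and only if for every subset J' ⊆ J, ∑_{i∈M} min(|{j ∈ J' : i ∈ D(j)}|, g)·x(i) ≥ ∑_{j∈J'} p(j). -/
/-!
Necessity: the jobs of `J'` can receive at most `min (#{j ∈ J' | i ∈ D j}) g * x i` units of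
work from machine `i`.

Sufficiency is max-flow/min-cut. Relax the demands to upper bounds, so that the admissible `y`
form a compact set, and take one of maximal total. Suppose job `j₀` is underserved and look at
everything reachable from `j₀` in the residual graph. If a reachable machine has spare capacity,
a small amount of flow can be pushed along the walk to it, increasing the total. Otherwise the
reachable jobs `A` violate the cut condition: each reachable machine is saturated by `A` alone,
and every edge from `A` to an unreachable machine is saturated, so the right-hand side for
`J' = A` is at most the flow out of `A`, which is less than `∑ j ∈ A, p j`.
-/

open Finset Filter Topology

theorem eventually_add_mul_le {a b c : ℝ} (hac : a ≤ c) (hb : 0 < b → a < c) :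
    ∀ᶠ δ in 𝓝[>] 0, a + δ * b ≤ c := by
  by_cases hb0 : 0 < b
  · have hlim : Tendsto (fun δ => a + δ * b) (𝓝[>] 0) (𝓝 a) :=
      ((continuous_const.add (continuous_id.mul continuous_const)).tendsto' 0 a
        (by simp)).mono_left nhdsWithin_le_nhds
    exact (hlim.eventually (eventually_lt_nhds (hb hb0))).mono fun _ => le_of_lt
  · filter_upwards [self_mem_nhdsWithin] with δ (hδ : 0 < δ)
    nlinarith

theorem eventually_le_add_mul {a b c : ℝ} (hca : c ≤ a) (hb : b < 0 → c < a) :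
    ∀ᶠ δ in 𝓝[>] 0, c ≤ a + δ * b := by
  filter_upwards [eventually_add_mul_le (a := -a) (b := -b) (c := -c) (neg_le_neg hca)
    fun h => neg_lt_neg (hb (neg_pos.1 h))] with δ h
  linarith

section Residual

variable {J M : Type*} (D : J → Finset M) (x : M → ℝ) (y : J → M → ℝ)

/-- Jobs are `.inl j`, machines `.inr i`; forward edges are unsaturated, backward edges carry
flow. -/
def ResidualAdj : J ⊕ M → J ⊕ M → Prop
  | .inl j, .inr i => i ∈ D j ∧ y j i < x i
  | .inr i, .inl j => i ∈ D j ∧ 0 < y j i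
  | _, _ => False

structure IsResidualDirection (d : J → M → ℝ) : Prop where
  eq_zero_of_notMem : ∀ j i, i ∉ D j → d j i = 0
  lt_of_pos : ∀ j i, 0 < d j i → y j i < x i
  pos_of_neg : ∀ j i, d j i < 0 → 0 < y j i

variable {D x y}

theorem IsResidualDirection.zero : IsResidualDirection D x y 0 :=
  ⟨fun _ _ _ => rfl, fun _ _ h => (lt_irrefl _ h).elim, fun _ _ h => (lt_irrefl _ h).elim⟩

variable [DecidableEq J] [DecidableEq M] {d : J → M → ℝ}

theorem IsResidualDirection.add_single (hd : IsResidualDirection D x y d) {j : J} {i : M}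
    (hi : i ∈ D j) {c : ℝ} (hc_pos : 0 < c → y j i < x i) (hc_neg : c < 0 → 0 < y j i) :
    IsResidualDirection D x y (d + Pi.single j (Pi.single i c)) := by
  have hentry : ∀ j' i', (d + Pi.single j (Pi.single i c) : J → M → ℝ) j' i' =
      d j' i' + if j' = j ∧ i' = i then c else 0 := by
    intro j' i'
    by_cases hj : j' = j <;> by_cases hi : i' = i <;> simp [hj, hi]
  refine ⟨fun j' i' hi' => ?_, fun j' i' hpos => ?_, fun j' i' hneg => ?_⟩ <;>
    rw [hentry] at * <;> split_ifs at * with hji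
  · exact absurd (hji.2 ▸ hji.1 ▸ hi) hi'
  · simpa using hd.eq_zero_of_notMem j' i' hi'
  · obtain ⟨rfl, rfl⟩ := hji
    by_cases hc : 0 < c
    · exact hc_pos hc
    · exact hd.lt_of_pos _ _ (by linarith)
  · exact hd.lt_of_pos _ _ (by linarith)
  · obtain ⟨rfl, rfl⟩ := hji
    by_cases hc : c < 0
    · exact hc_neg hc
    · exact hd.pos_of_neg _ _ (by linarith)
  · exact hd.pos_of_neg _ _ (by linarith)

end Residual

section Capacities

variable {J M : Type*} [Fintype J] {D : J → Finset M} {x : M → ℝ} {g : ℝ} {y : J → M → ℝ}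

variable (D x g y) in
structure RespectsCapacities : Prop where
  nonneg : ∀ j i, 0 ≤ y j i
  eq_zero_of_notMem : ∀ j i, i ∉ D j → y j i = 0
  le_cap : ∀ j i, y j i ≤ x i
  sum_le : ∀ i, ∑ j, y j i ≤ g * x i

section

variable [DecidableEq M]

theorem RespectsCapacities.sum_le_min_card_mul (hy : RespectsCapacities D x g y)
    (hx : ∀ i, 0 ≤ x i) (J' : Finset J) (i : M) :
    ∑ j ∈ J', y j i ≤ min (#{j ∈ J' | i ∈ D j} : ℝ) g * x i := by
  rw [min_mul_of_nonneg _ _ (hx i)]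
  refine le_min ?_ ?_
  · calc ∑ j ∈ J', y j i = ∑ j ∈ J' with i ∈ D j, y j i :=
          (sum_filter_of_ne fun j _ hj => not_not.1 (mt (hy.eq_zero_of_notMem j i) hj)).symm
      _ ≤ #{j ∈ J' | i ∈ D j} • x i := sum_le_card_nsmul _ _ _ fun j _ => hy.le_cap j i
      _ = _ := nsmul_eq_mul _ _
  · exact (sum_le_sum_of_subset_of_nonneg (subset_univ J') fun j _ _ => hy.nonneg j i).trans
      (hy.sum_le i)

theorem RespectsCapacities.min_card_mul_le_sum {A : Finset J} {B : Set M}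
    (hy : RespectsCapacities D x g y) (hx : ∀ i, 0 ≤ x i)
    (hA : ∀ j ∈ A, ∀ i ∈ D j, y j i < x i → i ∈ B)
    (hB : ∀ i ∈ B, ∀ j, i ∈ D j → 0 < y j i → j ∈ A)
    (hsat : ∀ i ∈ B, g * x i ≤ ∑ j, y j i) (i : M) :
    min (#{j ∈ A | i ∈ D j} : ℝ) g * x i ≤ ∑ j ∈ A, y j i := by
  by_cases hi : i ∈ B
  · have hout : ∀ j ∉ A, y j i = 0 := fun j hj =>
      (hy.nonneg j i).eq_or_lt.elim Eq.symm fun hpos =>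
        absurd (hB i hi j (by_contra fun h => hpos.ne' (hy.eq_zero_of_notMem j i h)) hpos) hj
    calc min (#{j ∈ A | i ∈ D j} : ℝ) g * x i ≤ g * x i :=
          mul_le_mul_of_nonneg_right (min_le_right _ _) (hx i)
      _ ≤ ∑ j, y j i := hsat i hi
      _ = ∑ j ∈ A, y j i :=
          (sum_subset (subset_univ A) fun j _ hj => hout j hj).symm
  · calc min (#{j ∈ A | i ∈ D j} : ℝ) g * x i ≤ #{j ∈ A | i ∈ D j} • x i := by
          rw [nsmul_eq_mul]
          exact mul_le_mul_of_nonneg_right (min_le_left _ _) (hx i)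
      _ ≤ ∑ j ∈ A with i ∈ D j, y j i := card_nsmul_le_sum _ _ _ fun j hj =>
          not_lt.1 fun hlt => hi (hA j (mem_filter.1 hj).1 i (mem_filter.1 hj).2 hlt)
      _ ≤ ∑ j ∈ A, y j i :=
          sum_le_sum_of_subset_of_nonneg (filter_subset _ _) fun j _ _ => hy.nonneg j i

end

variable [Fintype M]

theorem RespectsCapacities.eventually_add_smul (hy : RespectsCapacities D x g y)
    {d : J → M → ℝ} (hd : IsResidualDirection D x y d)
    (hslack : ∀ i, 0 < ∑ j, d j i → ∑ j, y j i < g * x i) :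
    ∀ᶠ δ in 𝓝[>] (0 : ℝ), RespectsCapacities D x g (y + δ • d) := by
  have hnonneg : ∀ᶠ δ in 𝓝[>] 0, ∀ j i, 0 ≤ y j i + δ * d j i :=
    eventually_all.2 fun j => eventually_all.2 fun i =>
      eventually_le_add_mul (hy.nonneg j i) (hd.pos_of_neg j i)
  have hcap : ∀ᶠ δ in 𝓝[>] 0, ∀ j i, y j i + δ * d j i ≤ x i :=
    eventually_all.2 fun j => eventually_all.2 fun i =>
      eventually_add_mul_le (hy.le_cap j i) (hd.lt_of_pos j i)
  have hsum : ∀ᶠ δ in 𝓝[>] 0, ∀ i, ∑ j, y j i + δ * ∑ j, d j i ≤ g * x i :=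
    eventually_all.2 fun i => eventually_add_mul_le (hy.sum_le i) (hslack i)
  filter_upwards [hnonneg, hcap, hsum] with δ hnonneg hcap hsum
  refine ⟨hnonneg, fun j i hi => ?_, hcap, fun i => ?_⟩
  · simp [hy.eq_zero_of_notMem j i hi, hd.eq_zero_of_notMem j i hi]
  · simpa [sum_add_distrib, mul_sum] using hsum i

variable (D x g) in
def partialSchedules (p : J → ℝ) : Set (J → M → ℝ) :=
  {y | RespectsCapacities D x g y ∧ ∀ j, ∑ i, y j i ≤ p j}

theorem isCompact_partialSchedules (p : J → ℝ) : IsCompact (partialSchedules D x g p) := by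
  have hclosed : IsClosed (partialSchedules D x g p) := by
    have : partialSchedules D x g p =
        (⋂ j, ⋂ i, {y | 0 ≤ y j i}) ∩ (⋂ j, ⋂ i ∉ D j, {y | y j i = 0}) ∩
          (⋂ j, ⋂ i, {y | y j i ≤ x i}) ∩ (⋂ i, {y | ∑ j, y j i ≤ g * x i}) ∩
          ⋂ j, {y | ∑ i, y j i ≤ p j} := by
      ext y
      simp only [partialSchedules, Set.mem_inter_iff, Set.mem_iInter]
      exact ⟨fun ⟨⟨h₁, h₂, h₃, h₄⟩, h₅⟩ => ⟨⟨⟨⟨h₁, h₂⟩, h₃⟩, h₄⟩, h₅⟩,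
        fun ⟨⟨⟨⟨h₁, h₂⟩, h₃⟩, h₄⟩, h₅⟩ => ⟨⟨h₁, h₂, h₃, h₄⟩, h₅⟩⟩
    rw [this]
    refine (((isClosed_iInter fun j => isClosed_iInter fun i => ?_).inter
      (isClosed_iInter fun j => isClosed_biInter fun i _ => ?_)).inter
      (isClosed_iInter fun j => isClosed_iInter fun i => ?_)).inter
      (isClosed_iInter fun i => ?_) |>.inter (isClosed_iInter fun j => ?_)
    · exact isClosed_le continuous_const (by fun_prop)
    · exact isClosed_eq (by fun_prop) continuous_const
    · exact isClosed_le (by fun_prop) continuous_const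
    · exact isClosed_le (by fun_prop) continuous_const
    · exact isClosed_le (by fun_prop) continuous_const
  refine (isCompact_Icc (a := 0) (b := fun _ => x)).of_isClosed_subset hclosed fun y hy => ?_
  exact ⟨fun j i => hy.1.nonneg j i, fun j i => hy.1.le_cap j i⟩

/-- The signed sum of the edges of a residual walk from `v` to `.inr t`: one unit of flow enters
at `v` and leaves at `t`. -/
theorem exists_isResidualDirection_of_reflTransGen [DecidableEq J] [DecidableEq M]
    {v : J ⊕ M} {t : M} (h : Relation.ReflTransGen (ResidualAdj D x y) v (.inr t)) :
    ∃ d, IsResidualDirection D x y d ∧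
      (∀ j, ∑ i, d j i = if .inl j = v then 1 else 0) ∧
      (∀ i, ∑ j, d j i = (if i = t then 1 else 0) - if .inr i = v then 1 else 0) := by
  induction h using Relation.ReflTransGen.head_induction_on with
  | refl => exact ⟨0, .zero, by simp, by simp⟩
  | @head a b hab _ ih =>
    obtain ⟨d, hd, hrow, hcol⟩ := ih
    match a, b, hab with
    | .inl j, .inr i, ⟨hi, hlt⟩ =>
      refine ⟨d + Pi.single j (Pi.single i 1), hd.add_single hi (fun _ => hlt)
        fun h => absurd h zero_le_one.not_gt, fun j' => ?_, fun i' => ?_⟩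
      · by_cases hj : j' = j <;> simp [sum_add_distrib, hrow, hj]
      · by_cases hi : i' = i <;> simp [sum_add_distrib, hcol, Pi.single_apply, ite_apply, hi]
    | .inr i, .inl j, ⟨hi, hpos⟩ =>
      refine ⟨d + Pi.single j (Pi.single i (-1)), hd.add_single hi
        (fun h => absurd h (by norm_num)) fun _ => hpos, fun j' => ?_, fun i' => ?_⟩
      · by_cases hj : j' = j <;> simp [sum_add_distrib, hrow, hj]
      · by_cases hi : i' = i <;> simp [sum_add_distrib, hcol, Pi.single_apply, ite_apply, hi,
          sub_eq_add_neg]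

theorem exists_sum_sum_lt_of_reflTransGen {p : J → ℝ} (hy : y ∈ partialSchedules D x g p)
    {j₀ : J} {t : M} (hj₀ : ∑ i, y j₀ i < p j₀)
    (hreach : Relation.ReflTransGen (ResidualAdj D x y) (.inl j₀) (.inr t))
    (ht : ∑ j, y j t < g * x t) :
    ∃ y' ∈ partialSchedules D x g p, ∑ j, ∑ i, y j i < ∑ j, ∑ i, y' j i := by
  classical
  obtain ⟨d, hd, hrow, hcol⟩ := exists_isResidualDirection_of_reflTransGen hreach
  simp only [Sum.inl.injEq, reduceCtorEq, if_false, sub_zero] at hrow hcol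
  have hflow := hy.1.eventually_add_smul hd fun i hi => by
    rw [hcol] at hi
    split_ifs at hi with hit
    · exact hit ▸ ht
    · exact absurd hi (lt_irrefl 0)
  have hjobs : ∀ᶠ δ in 𝓝[>] (0 : ℝ), ∀ j, ∑ i, y j i + δ * ∑ i, d j i ≤ p j :=
    eventually_all.2 fun j => eventually_add_mul_le (hy.2 j) fun hj => by
      rw [hrow] at hj
      split_ifs at hj with hjj
      · exact hjj ▸ hj₀
      · exact absurd hj (lt_irrefl 0)
  obtain ⟨δ, hflow, hjobs, hδ : 0 < δ⟩ := (hflow.and (hjobs.and self_mem_nhdsWithin)).exists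
  refine ⟨y + δ • d, ⟨hflow, fun j => by simpa [sum_add_distrib, mul_sum] using hjobs j⟩, ?_⟩
  have htotal : ∑ j, ∑ i, d j i = 1 := by simp [hrow]
  simp only [Pi.add_apply, Pi.smul_apply, smul_eq_mul, sum_add_distrib, ← mul_sum, htotal]
  linarith

theorem exists_isMaxOn_partialSchedules {p : J → ℝ} (hp : ∀ j, 0 ≤ p j) (hx : ∀ i, 0 ≤ x i)
    (hg : 0 ≤ g) :
    ∃ y ∈ partialSchedules D x g p,
      IsMaxOn (fun y => ∑ j, ∑ i, y j i) (partialSchedules D x g p) y := by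
  have hzero : 0 ∈ partialSchedules D x g p :=
    ⟨⟨fun _ _ => le_rfl, fun _ _ _ => rfl, fun _ i => hx i, fun i => by
      simpa using mul_nonneg hg (hx i)⟩, fun j => by simpa using hp j⟩
  exact isCompact_partialSchedules p |>.exists_isMaxOn ⟨0, hzero⟩ (by fun_prop)

theorem exists_respectsCapacities_le_sum [DecidableEq M] {p : J → ℝ} (hp : ∀ j, 0 ≤ p j)
    (hx : ∀ i, 0 ≤ x i) (hg : 0 ≤ g)
    (hcut : ∀ J' : Finset J, ∑ j ∈ J', p j ≤ ∑ i, min (#{j ∈ J' | i ∈ D j} : ℝ) g * x i) :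
    ∃ y, RespectsCapacities D x g y ∧ ∀ j, p j ≤ ∑ i, y j i := by
  classical
  obtain ⟨y, hy, hmax⟩ := exists_isMaxOn_partialSchedules (D := D) hp hx hg
  refine ⟨y, hy.1, fun j₀ => not_lt.1 fun hj₀ => ?_⟩
  set R := Relation.ReflTransGen (ResidualAdj D x y) (.inl j₀)
  by_cases hslack : ∃ t, R (.inr t) ∧ ∑ j, y j t < g * x t
  · obtain ⟨t, hreach, ht⟩ := hslack
    obtain ⟨y', hy', hlt⟩ := exists_sum_sum_lt_of_reflTransGen hy hj₀ hreach ht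
    exact (hmax hy').not_gt hlt
  · simp only [not_exists, not_and, not_lt] at hslack
    set A : Finset J := {j | R (.inl j)}
    have hcapA : ∑ i, min (#{j ∈ A | i ∈ D j} : ℝ) g * x i ≤ ∑ j ∈ A, ∑ i, y j i := by
      rw [sum_comm]
      exact sum_le_sum fun i _ => hy.1.min_card_mul_le_sum (B := {i | R (.inr i)}) hx
        (fun j hj i hi hlt => (mem_filter.1 hj).2.tail ⟨hi, hlt⟩)
        (fun i hi j hij hpos => mem_filter.2
          ⟨mem_univ _, hi.tail (show ResidualAdj D x y (.inr i) (.inl j) from ⟨hij, hpos⟩)⟩)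
        hslack i
    have hdeficit : ∑ j ∈ A, ∑ i, y j i < ∑ j ∈ A, p j :=
      sum_lt_sum (fun j _ => hy.2 j) ⟨j₀, mem_filter.2 ⟨mem_univ _, .refl⟩, hj₀⟩
    linarith [hcut A]

end Capacities

/-- Feasibility of the fractional schedule (equivalently, max s-t flow value equals
`∑ j, p j` in the 4-layer network) iff the covering condition holds for all `J' ⊆ J`. -/
theorem stmt_8 {J M : Type*} [Fintype J] [Fintype M] [DecidableEq M]
    (D : J → Finset M) (p : J → ℝ) (x : M → ℝ) (g : ℝ)
    (hp : ∀ j, 0 ≤ p j) (hx : ∀ i, 0 ≤ x i) (hg : 0 < g) :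
    (∃ y : J → M → ℝ,
      (∀ j i, 0 ≤ y j i) ∧
      (∀ j i, i ∉ D j → y j i = 0) ∧
      (∀ j, p j ≤ ∑ i, y j i) ∧
      (∀ j i, y j i ≤ x i) ∧
      (∀ i, ∑ j, y j i ≤ g * x i)) ↔
    (∀ J' : Finset J,
      ∑ j ∈ J', p j ≤
        ∑ i, min ((J'.filter (fun j => i ∈ D j)).card : ℝ) g * x i) := by
  constructor
  · rintro ⟨y, hy₀, hyD, hyp, hyx, hyg⟩ J'
    have hy : RespectsCapacities D x g y := ⟨hy₀, hyD, hyx, hyg⟩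
    calc ∑ j ∈ J', p j ≤ ∑ j ∈ J', ∑ i, y j i := sum_le_sum fun j _ => hyp j
      _ = ∑ i, ∑ j ∈ J', y j i := sum_comm
      _ ≤ _ := sum_le_sum fun i _ => hy.sum_le_min_card_mul hx J' i
  · intro hcut
    obtain ⟨y, hy, hyp⟩ := exists_respectsCapacities_le_sum hp hx hg.le hcut
    exact ⟨y, hy.nonneg, hy.eq_zero_of_notMem, hyp, hy.le_cap, hy.sum_le⟩
end

section
/- In the covering condition of the feasibility lemma, it suffices to check sets J' that are 'irreducible': if J' contains a job j with p(j) ≤ ∑_{i ∈ D(j), |{j'∈J' : i∈D(j')}| ≤ g} x(i), then the covering inequality for J' is implied by the covering inequality for J' \ {j}. -/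
/-! Removing `j` from `J'` lowers the capped count `min (#{j' ∈ J' | i ∈ D j'}) g` by exactly one
when `i ∈ D j` and the count is at most `g`, and leaves it unchanged otherwise. Hence the
right-hand side of the covering inequality for `J'` equals that for `J' \ {j}` plus the sum
bounding `p j`, and adding the two hypotheses gives the claim. -/

open Finset

theorem min_card_erase_add_ite {α : Type*} [DecidableEq α] (s : Finset α) (a : α) (g : ℕ) :
    min #(s.erase a) g + (if a ∈ s ∧ #s ≤ g then 1 else 0) = min #s g := by
  by_cases ha : a ∈ s
  · have := card_erase_add_one ha
    by_cases hs : #s ≤ g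
    · rw [if_pos ⟨ha, hs⟩]; omega
    · rw [if_neg (fun h => hs h.2)]; omega
  · simp [ha]

theorem sum_min_card_erase_add_sum_filter {J M : Type*} [Fintype M] [DecidableEq J]
    [DecidableEq M] (D : J → Finset M) (x : M → ℝ) (g : ℕ) (J' : Finset J) (j : J)
    (hj : j ∈ J') :
    ∑ i, min (#((J'.erase j).filter (fun j' => i ∈ D j')) : ℝ) g * x i
        + ∑ i ∈ (D j).filter (fun i => #(J'.filter (fun j' => i ∈ D j')) ≤ g), x i
      = ∑ i, min (#(J'.filter (fun j' => i ∈ D j')) : ℝ) g * x i := by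
  have hfilter : (D j).filter (fun i => #(J'.filter (fun j' => i ∈ D j')) ≤ g)
      = univ.filter (fun i => i ∈ D j ∧ #(J'.filter (fun j' => i ∈ D j')) ≤ g) := by
    ext; simp
  rw [hfilter, sum_filter, ← sum_add_distrib]
  refine sum_congr rfl fun i _ => ?_
  have hmem : j ∈ J'.filter (fun j' => i ∈ D j') ↔ i ∈ D j := by simp [hj]
  have h := congrArg (fun n : ℕ => (n : ℝ) * x i)
    (min_card_erase_add_ite (J'.filter (fun j' => i ∈ D j')) j g)
  simpa only [hmem, Nat.cast_add, Nat.cast_min, Nat.cast_ite, Nat.cast_one, Nat.cast_zero,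
    add_mul, ite_mul, one_mul, zero_mul, filter_erase] using h

theorem stmt_9_general {J M : Type*} [Fintype M] [DecidableEq J] [DecidableEq M]
    (D : J → Finset M) (p : J → ℝ) (x : M → ℝ) (g : ℕ)
    (J' : Finset J) (j : J) (hj : j ∈ J')
    (hred : p j ≤ ∑ i ∈ (D j).filter
        (fun i => ((J'.filter (fun j' => i ∈ D j')).card ≤ g)), x i)
    (hcov : ∑ j' ∈ J'.erase j, p j' ≤
      ∑ i, min (((J'.erase j).filter (fun j' => i ∈ D j')).card : ℝ) g * x i) :
    ∑ j' ∈ J', p j' ≤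
      ∑ i, min ((J'.filter (fun j' => i ∈ D j')).card : ℝ) g * x i := by
  rw [← add_sum_erase J' p hj, ← sum_min_card_erase_add_sum_filter D x g J' j hj, add_comm]
  exact add_le_add hcov hred

/-- Irreducibility: if `j ∈ J'` satisfies
`p j ≤ ∑_{i ∈ D j, |{j' ∈ J' : i ∈ D j'}| ≤ g} x i`, then the covering inequality
for `J'` follows from the covering inequality for `J' \ {j}`. -/
theorem stmt_9 {J M : Type*} [Fintype J] [Fintype M] [DecidableEq J] [DecidableEq M]
    (D : J → Finset M) (p : J → ℝ) (x : M → ℝ) (g : ℕ)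
    (hp : ∀ j, 0 ≤ p j) (hx : ∀ i, 0 ≤ x i) (hg : 0 < g)
    (J' : Finset J) (j : J) (hj : j ∈ J')
    (hred : p j ≤ ∑ i ∈ (D j).filter
        (fun i => ((J'.filter (fun j' => i ∈ D j')).card ≤ g)), x i)
    (hcov : ∑ j' ∈ J'.erase j, p j' ≤
      ∑ i, min (((J'.erase j).filter (fun j' => i ∈ D j')).card : ℝ) g * x i) :
    ∑ j' ∈ J', p j' ≤
      ∑ i, min ((J'.filter (fun j' => i ∈ D j')).card : ℝ) g * x i :=
  stmt_9_general D p x g J' j hj hred hcov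
end
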